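/- For all x in (0, π/2), 2·(sin x)/x + (tan x)/x > 2·x/(sin x) + x/(tan x) > 3. -/

import Mathlib

/-!
Writing `s = sin x`, `c = cos x`, the two inequalities clear denominators to
`x² c (2 + c) < s² (2c + 1)` and `3 s < x (2 + c)`. Both follow from the Taylor bounds
`x - x³/6 ≤ sin x ≤ x - x³/6 + x⁵/120` and `1 - x²/2 + x⁴/24 - x⁶/720 ≤ cos x ≤ 1 - x²/2 + x⁴/24`
on `x ≥ 0`, each obtained from the previous one by integrating from `0`: after substitution
the differences are `x⁶ q(x²)` and `x⁵ (12 - x²) / 720` with `q` positive on `[0, 4]`.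
-/

open Real Set

theorem le_of_hasDerivAt_le {f g f' g' : ℝ → ℝ} {a b : ℝ}
    (hf : ∀ y, HasDerivAt f (f' y) y) (hg : ∀ y, HasDerivAt g (g' y) y)
    (hfg' : ∀ y ∈ Ico a b, f' y ≤ g' y) (ha : f a ≤ g a) (hab : a ≤ b) : f b ≤ g b :=
  image_le_of_deriv_right_le_deriv_boundary
    (fun y _ => (hf y).continuousAt.continuousWithinAt) (fun y _ => (hf y).hasDerivWithinAt) ha
    (fun y _ => (hg y).continuousAt.continuousWithinAt) (fun y _ => (hg y).hasDerivWithinAt) hfg'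
    ⟨hab, le_rfl⟩

namespace Real

variable {x : ℝ}

theorem cos_le_quartic (hx : 0 ≤ x) : cos x ≤ 1 - x ^ 2 / 2 + x ^ 4 / 24 :=
  le_of_hasDerivAt_le (g := fun t => 1 - t ^ 2 / 2 + t ^ 4 / 24) (g' := fun t => -(t - t ^ 3 / 6))
    hasDerivAt_cos
    (fun y => (((hasDerivAt_pow 2 y).div_const 2).const_sub 1 |>.add
      ((hasDerivAt_pow 4 y).div_const 24)).congr_deriv (by push_cast; ring))
    (fun y hy => neg_le_neg (sin_ge_sub_cube hy.1)) (by norm_num) hx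

theorem sin_le_quintic (hx : 0 ≤ x) : sin x ≤ x - x ^ 3 / 6 + x ^ 5 / 120 :=
  le_of_hasDerivAt_le (g := fun t => t - t ^ 3 / 6 + t ^ 5 / 120)
    (g' := fun t => 1 - t ^ 2 / 2 + t ^ 4 / 24)
    hasDerivAt_sin
    (fun y => (((hasDerivAt_id y).sub ((hasDerivAt_pow 3 y).div_const 6)).add
      ((hasDerivAt_pow 5 y).div_const 120)).congr_deriv (by push_cast; ring))
    (fun y hy => cos_le_quartic hy.1) (by norm_num) hx

theorem sextic_le_cos (hx : 0 ≤ x) : 1 - x ^ 2 / 2 + x ^ 4 / 24 - x ^ 6 / 720 ≤ cos x :=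
  le_of_hasDerivAt_le (f := fun t => 1 - t ^ 2 / 2 + t ^ 4 / 24 - t ^ 6 / 720)
    (f' := fun t => -(t - t ^ 3 / 6 + t ^ 5 / 120))
    (fun y => (((((hasDerivAt_pow 2 y).div_const 2).const_sub 1).add
      ((hasDerivAt_pow 4 y).div_const 24)).sub ((hasDerivAt_pow 6 y).div_const 720)).congr_deriv
        (by push_cast; ring))
    hasDerivAt_cos (fun y hy => neg_le_neg (sin_le_quintic hy.1)) (by norm_num) hx

theorem three_mul_sin_lt (hx0 : 0 < x) (hx : x ^ 2 < 12) : 3 * sin x < x * (2 + cos x) := by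
  have hsin := sin_le_quintic hx0.le
  have hcos := mul_le_mul_of_nonneg_left (sextic_le_cos hx0.le) hx0.le
  nlinarith [mul_pos (pow_pos hx0 5) (sub_pos.2 hx)]

theorem sq_mul_cos_mul_two_add_cos_lt (hx0 : 0 < x) (hx : x < 2) :
    x ^ 2 * (cos x * (2 + cos x)) < sin x ^ 2 * (2 * cos x + 1) := by
  have hx4 : x ^ 2 < 4 := by nlinarith
  have hcos_up := cos_le_quartic hx0.le
  have hcos_lo := sextic_le_cos hx0.le
  have hsin_sq : (x - x ^ 3 / 6) ^ 2 ≤ sin x ^ 2 :=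
    pow_le_pow_left₀ (by nlinarith) (sin_ge_sub_cube hx0.le) 2
  have hsextic : 0 ≤ 2 * (1 - x ^ 2 / 2 + x ^ 4 / 24 - x ^ 6 / 720) + 1 := by
    nlinarith [mul_nonneg (sq_nonneg (x ^ 2)) (sub_nonneg.2 hx4.le)]
  -- the difference of the two sides is `x ^ 6 * q (x ^ 2)`, `q t = 1/12 - t/60 + 13 t²/8640 - t³/12960`
  have hpoly : x ^ 2 * ((1 - x ^ 2 / 2 + x ^ 4 / 24) * (2 + (1 - x ^ 2 / 2 + x ^ 4 / 24))) <
      (x - x ^ 3 / 6) ^ 2 * (2 * (1 - x ^ 2 / 2 + x ^ 4 / 24 - x ^ 6 / 720) + 1) := by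
    have hq : 0 < 1 / 12 - x ^ 2 / 60 + 13 * x ^ 4 / 8640 - x ^ 6 / 12960 := by
      nlinarith [mul_nonneg (pow_nonneg (sq_nonneg x) 2) (sub_nonneg.2 hx4.le)]
    nlinarith [mul_pos (pow_pos hx0 6) hq]
  calc x ^ 2 * (cos x * (2 + cos x))
      ≤ x ^ 2 * ((1 - x ^ 2 / 2 + x ^ 4 / 24) * (2 + (1 - x ^ 2 / 2 + x ^ 4 / 24))) := by
        refine mul_le_mul_of_nonneg_left ?_ (sq_nonneg x)
        -- `t ↦ t (2 + t)` is increasing on `[-1, ∞)`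
        nlinarith [mul_nonneg (sub_nonneg.2 hcos_up) (by linarith [neg_one_le_cos x] :
          0 ≤ 2 + cos x + (1 - x ^ 2 / 2 + x ^ 4 / 24))]
    _ < (x - x ^ 3 / 6) ^ 2 * (2 * (1 - x ^ 2 / 2 + x ^ 4 / 24 - x ^ 6 / 720) + 1) := hpoly
    _ ≤ sin x ^ 2 * (2 * cos x + 1) :=
        mul_le_mul hsin_sq (by linarith) hsextic (sq_nonneg _)

end Real

theorem huygens_circular_refined (x : ℝ) (hx0 : 0 < x) (hx1 : x < π / 2) :
    2 * (Real.sin x) / x + (Real.tan x) / x > 2 * x / (Real.sin x) + x / (Real.tan x) ∧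
    2 * x / (Real.sin x) + x / (Real.tan x) > 3 := by
  have hx2 : x < 2 := by linarith [pi_lt_four]
  have hs : 0 < sin x := sin_pos_of_pos_of_lt_pi hx0 (by linarith [pi_pos])
  have hc : 0 < cos x := cos_pos_of_mem_Ioo ⟨by linarith [pi_pos], hx1⟩
  have hL : 2 * sin x / x + tan x / x = sin x * (2 * cos x + 1) / (x * cos x) := by
    rw [tan_eq_sin_div_cos]; field_simp
  have hR : 2 * x / sin x + x / tan x = x * (2 + cos x) / sin x := by
    rw [tan_eq_sin_div_cos]; field_simp
  rw [hL, hR, gt_iff_lt, gt_iff_lt, div_lt_div_iff₀ hs (by positivity), lt_div_iff₀ hs]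
  exact ⟨by linarith [sq_mul_cos_mul_two_add_cos_lt hx0 hx2],
    by linarith [three_mul_sin_lt hx0 (by nlinarith)]⟩
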